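/- Let (G,·,▷,Φ) be a twisted post group with surjective cocycle Φ. Then the sub-adjacent semigroup (G,∘) is a group, and defining a•b = (a∘1†)∘b makes (G,·,•) a skew left brace: (G,·) and (G,•) are groups and a•(b·c) = (a•b)·a^{-1}·(a•c) for all a,b,c. -/

import Mathlib

/-!
Since `▷` is an action of `(G, ∘)` by automorphisms, `e_{a ∘ b} = e_b`; as `a ∘ 1 = Φ(a)` and
`Φ` is onto, every `e_c` equals `e_1`. Because `c ∘ e_c = c`, `e_1` is then a right identity of
the associative, left cancellative operation `∘`, which has right inverses since each `a ▷ ·` is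
onto; so `(G, ∘)` is a group. As `1 ∘ 1† = e_1`, `1†` is the `∘`-inverse of `1`, and
`a • b = a ∘ 1† ∘ b` is `∘` transported along `x ↦ x ∘ 1†`, a group with identity `1`. Finally
`Φ(a ∘ 1†) = a ∘ 1† ∘ 1 = a`, and `s ∘ (b c) = (s ∘ b) Φ(s)⁻¹ (s ∘ c)` because `s ▷ ·` is
multiplicative.
-/

/-- A (left) twisted post group: a group `G` with a binary operation `tri` (written `▷`)
and a cocycle `phi` such that each left multiplication `tri a` is a group automorphism,
`(a ∘ b) ▷ c = a ▷ (b ▷ c)` and `Φ(a ∘ b) = a ∘ Φ(b)`, where `a ∘ b = Φ(a)·(a ▷ b)`. -/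
structure TPG (G : Type*) [Group G] where
  tri : G → G → G
  phi : G → G
  tri_mul : ∀ a b c : G, tri a (b * c) = tri a b * tri a c
  tri_bij : ∀ a : G, Function.Bijective (tri a)
  tri_assoc : ∀ a b c : G, tri (phi a * tri a b) c = tri a (tri b c)
  phi_comp : ∀ a b : G, phi (phi a * tri a b) = phi a * tri a (phi b)

namespace TPG

variable {G : Type*} [Group G] (T : TPG G)

/-- The sub-adjacent operation `a ∘ b = Φ(a)·(a ▷ b)`. -/
def circ (a b : G) : G := T.phi a * T.tri a b

/-- `e_a = (L_a^▷)⁻¹(Φ(a)⁻¹·a)`. -/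
noncomputable def e (a : G) : G := Function.invFun (T.tri a) ((T.phi a)⁻¹ * a)

/-- `a† = (L_a^▷)⁻¹(Φ(a)⁻¹·e_a)`. -/
noncomputable def dag (a : G) : G := Function.invFun (T.tri a) ((T.phi a)⁻¹ * T.e a)

end TPG

namespace TPG

variable {G : Type*} [Group G] (T : TPG G)

lemma tri_one (a : G) : T.tri a 1 = 1 :=
  (MonoidHom.mk' (T.tri a) (T.tri_mul a)).map_one

lemma tri_inv (a b : G) : T.tri a b⁻¹ = (T.tri a b)⁻¹ :=
  (MonoidHom.mk' (T.tri a) (T.tri_mul a)).map_inv b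

lemma circ_assoc (a b c : G) : T.circ (T.circ a b) c = T.circ a (T.circ b c) := by
  simp only [circ, T.phi_comp, T.tri_assoc, T.tri_mul, mul_assoc]

lemma circ_left_cancel {a x y : G} (h : T.circ a x = T.circ a y) : x = y :=
  (T.tri_bij a).1 (mul_left_cancel h)

lemma exists_circ_eq (a c : G) : ∃ y, T.circ a y = c := by
  obtain ⟨y, hy⟩ := (T.tri_bij a).2 ((T.phi a)⁻¹ * c)
  exact ⟨y, by rw [circ, hy, mul_inv_cancel_left]⟩

lemma circ_one (a : G) : T.circ a 1 = T.phi a := by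
  rw [circ, T.tri_one, mul_one]

lemma circ_mul (s b c : G) : T.circ s (b * c) = T.circ s b * (T.phi s)⁻¹ * T.circ s c := by
  simp only [circ, T.tri_mul]
  group

lemma tri_e (a : G) : T.tri a (T.e a) = (T.phi a)⁻¹ * a :=
  Function.rightInverse_invFun (T.tri_bij a).2 _

lemma circ_e (a : G) : T.circ a (T.e a) = a := by
  rw [circ, T.tri_e, mul_inv_cancel_left]

lemma e_circ (a b : G) : T.e (T.circ a b) = T.e b := by
  apply (T.tri_bij (T.circ a b)).1
  rw [T.tri_e]
  simp only [circ, T.tri_assoc, T.phi_comp]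
  rw [T.tri_e b, T.tri_mul, T.tri_inv]
  group

lemma circ_dag (a : G) : T.circ a (T.dag a) = T.e a := by
  rw [circ, dag, Function.rightInverse_invFun (T.tri_bij a).2, mul_inv_cancel_left]

section SurjectivePhi

variable {T} (hsurj : Function.Surjective T.phi)
include hsurj

lemma e_eq_e_one (c : G) : T.e c = T.e 1 := by
  obtain ⟨a, rfl⟩ := hsurj c
  rw [← T.circ_one, T.e_circ]

lemma circ_e_one (a : G) : T.circ a (T.e 1) = a := by
  rw [← e_eq_e_one hsurj a, T.circ_e]

lemma e_one_circ (a : G) : T.circ (T.e 1) a = a :=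
  T.circ_left_cancel (a := T.e 1) (by rw [← T.circ_assoc, circ_e_one hsurj])

lemma exists_circ_inverse (a : G) : ∃ y, T.circ a y = T.e 1 ∧ T.circ y a = T.e 1 := by
  obtain ⟨y, hay⟩ := T.exists_circ_eq a (T.e 1)
  obtain ⟨z, hyz⟩ := T.exists_circ_eq y (T.e 1)
  refine ⟨y, hay, ?_⟩
  calc T.circ y a = T.circ (T.circ y a) (T.circ y z) := by rw [hyz, circ_e_one hsurj]
    _ = T.circ y (T.circ (T.circ a y) z) := by rw [T.circ_assoc, T.circ_assoc]
    _ = T.e 1 := by rw [hay, e_one_circ hsurj, hyz]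

lemma dag_one_circ_one : T.circ (T.dag 1) 1 = T.e 1 :=
  T.circ_left_cancel (a := 1) (by
    rw [← T.circ_assoc, T.circ_dag, e_one_circ hsurj, circ_e_one hsurj])

lemma phi_circ_dag_one (a : G) : T.phi (T.circ a (T.dag 1)) = a := by
  rw [← T.circ_one, T.circ_assoc, dag_one_circ_one hsurj, circ_e_one hsurj]

lemma exists_dot_inverse (a : G) :
    ∃ b, T.circ (T.circ a (T.dag 1)) b = 1 ∧ T.circ (T.circ b (T.dag 1)) a = 1 := by
  obtain ⟨a', ha', ha'a⟩ := exists_circ_inverse hsurj a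
  refine ⟨T.circ 1 (T.circ a' 1), ?_, ?_⟩
  · rw [T.circ_assoc, ← T.circ_assoc (T.dag 1) 1, dag_one_circ_one hsurj,
      e_one_circ hsurj, ← T.circ_assoc a a', ha', e_one_circ hsurj]
  · rw [T.circ_assoc 1, T.circ_assoc a', T.circ_dag, circ_e_one hsurj,
      T.circ_assoc 1, ha'a, circ_e_one hsurj]

end SurjectivePhi

end TPG

/-- If the cocycle `Φ` of a twisted post group is surjective, then `(G, ∘)` is a
group and `a • b = (a ∘ 1†) ∘ b` makes `(G, ·, •)` a skew left brace. -/
theorem surjective_cocycle_skewBrace {G : Type*} [Group G] (T : TPG G)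
    (hsurj : Function.Surjective T.phi) :
    (∀ a b c : G, T.circ (T.circ a b) c = T.circ a (T.circ b c)) ∧
    (∀ x : G, T.circ x (T.e 1) = x ∧ T.circ (T.e 1) x = x) ∧
    (∀ x : G, ∃ y : G, T.circ x y = T.e 1 ∧ T.circ y x = T.e 1) ∧
    (∀ a b c : G,
      T.circ (T.circ (T.circ (T.circ a (T.dag 1)) b) (T.dag 1)) c =
        T.circ (T.circ a (T.dag 1)) (T.circ (T.circ b (T.dag 1)) c)) ∧
    (∀ a : G, T.circ (T.circ a (T.dag 1)) 1 = a ∧ T.circ (T.circ 1 (T.dag 1)) a = a) ∧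
    (∀ a : G, ∃ b : G, T.circ (T.circ a (T.dag 1)) b = 1 ∧
      T.circ (T.circ b (T.dag 1)) a = 1) ∧
    (∀ a b c : G, T.circ (T.circ a (T.dag 1)) (b * c) =
      T.circ (T.circ a (T.dag 1)) b * a⁻¹ * T.circ (T.circ a (T.dag 1)) c) := by
  refine ⟨T.circ_assoc, fun x => ⟨TPG.circ_e_one hsurj x, TPG.e_one_circ hsurj x⟩,
    TPG.exists_circ_inverse hsurj, fun a b c => by simp only [T.circ_assoc],
    fun a => ⟨?_, ?_⟩, TPG.exists_dot_inverse hsurj, fun a b c => ?_⟩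
  · rw [T.circ_one, TPG.phi_circ_dag_one hsurj]
  · rw [T.circ_dag, TPG.e_one_circ hsurj]
  · rw [T.circ_mul, TPG.phi_circ_dag_one hsurj]
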